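/- Let n ≥ 3 and let S_n be the star graph on vertices {0,1,...,n−1} with center 0. Then PsEnd(S_n) equals the union of the following three sets: (i) {α : 0 ∈ dom(α), 0α = 0, {1,...,n−1}α ⊆ {1,...,n−1}} ∪ {α : dom(α) ⊆ {1,...,n−1}, im(α) ⊆ {1,...,n−1}}; (ii) {α : 0 ∉ dom(α) and im(α) = {0}}; (iii) {α : 0 ∈ dom(α), 0α ≠ 0 and {1,...,n−1}α ⊆ {0}}, where all α range over partial maps on {0,1,...,n−1}. -/

import Mathlib

variable {V : Type*}

/-- Partial transformations of `V`. -/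
abbrev PTrans (V : Type*) := V → Option V

/-- Monoid of partial transformations under (left-to-right) composition. -/
instance : Monoid (PTrans V) where
  mul f g := fun v => (f v).bind g
  one := fun v => some v
  mul_assoc f g h := by
    funext v
    show ((f v).bind g).bind h = (f v).bind (fun x => (g x).bind h)
    cases f v <;> simp
  one_mul f := by funext v; rfl
  mul_one f := by
    funext v
    show (f v).bind (fun x => some x) = f v
    cases f v <;> simp

/-- Domain of a partial transformation. -/
def pdom (α : PTrans V) : Set V := {u | α u ≠ none}

/-- Image of a partial transformation. -/
def pim (α : PTrans V) : Set V := {v | ∃ u, α u = some v}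

def IsPEnd (G : SimpleGraph V) (α : PTrans V) : Prop :=
  ∀ u v u' v', α u = some u' → α v = some v' → G.Adj u v → G.Adj u' v'

def IsPwEnd (G : SimpleGraph V) (α : PTrans V) : Prop :=
  ∀ u v u' v', α u = some u' → α v = some v' → G.Adj u v → u' ≠ v' → G.Adj u' v'

def IsPsEnd (G : SimpleGraph V) (α : PTrans V) : Prop :=
  ∀ u v u' v', α u = some u' → α v = some v' → (G.Adj u v ↔ G.Adj u' v')

def IsPswEnd (G : SimpleGraph V) (α : PTrans V) : Prop :=
  ∀ u v u' v', α u = some u' → α v = some v' → ((G.Adj u v ∧ u' ≠ v') ↔ G.Adj u' v')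

/-- Injectivity of a partial transformation. -/
def PInjective (α : PTrans V) : Prop :=
  ∀ u v w, α u = some w → α v = some w → u = v

open Classical in
/-- The inverse of a partial (injective) transformation. -/
noncomputable def pinv (α : PTrans V) : PTrans V :=
  fun v => if h : ∃ u, α u = some v then some h.choose else none

/-- Partial automorphism: injective, and both it and its inverse are
partial endomorphisms. -/
def IsPAut (G : SimpleGraph V) (α : PTrans V) : Prop :=
  PInjective α ∧ IsPEnd G α ∧ IsPEnd G (pinv α)

/-- The star graph on vertices `{0,1,...,n-1}` with center `0`. -/
def starGraph (n : ℕ) : SimpleGraph (Fin n) :=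
  SimpleGraph.fromRel (fun u _ => (u : ℕ) = 0)

/-!
A strong partial endomorphism of a star with center `c` either respects the dichotomy
"center / leaf" on its domain or exchanges it. If `c` is mapped to `c`, a leaf cannot go to `c` since it is adjacent to `c`;
if `c` is mapped to a leaf `j`, every leaf must go to a neighbour of `j`, i.e. to `c`; if `c` is not in the
domain, two leaves are non-adjacent, so their images are equal or both leaves, and one leaf mapped to `c`
forces all of them there. Conversely both kinds of maps are readily seen to respect (non-)adjacency.
-/

variable {V : Type*}

def SimpleGraph.IsStarCenteredAt (G : SimpleGraph V) (c : V) : Prop :=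
  ∀ u v, G.Adj u v ↔ u ≠ v ∧ (u = c ∨ v = c)

def PreservesCenter (α : PTrans V) (c : V) : Prop :=
  ∀ u u', α u = some u' → (u = c ↔ u' = c)

def SwapsCenter (α : PTrans V) (c : V) : Prop :=
  ∀ u u', α u = some u' → (u = c ↔ u' ≠ c)

theorem starGraph_isStarCenteredAt {n : ℕ} (hn : 0 < n) :
    (starGraph n).IsStarCenteredAt ⟨0, hn⟩ := by
  intro u v
  simp [starGraph, SimpleGraph.fromRel_adj, Fin.ext_iff]

theorem preservesCenter_iff {α : PTrans V} {c : V} :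
    PreservesCenter α c ↔
      (α c = some c ∧ ∀ i, i ≠ c → ∀ j, α i = some j → j ≠ c) ∨
        (α c = none ∧ ∀ i j, α i = some j → j ≠ c) := by
  refine ⟨fun hα => ?_, ?_⟩
  · cases hc : α c with
    | some c' =>
      obtain rfl : c' = c := ((hα c c' hc).1 rfl)
      exact .inl ⟨rfl, fun i hi j hij => mt (hα i j hij).2 hi⟩
    | none =>
      refine .inr ⟨rfl, fun i j hij hj => ?_⟩
      obtain rfl := (hα i j hij).2 hj
      simp_all
  · rintro (⟨hc, hleaf⟩ | ⟨hc, himg⟩) u u' hu <;> grind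

theorem swapsCenter_and_nonempty_iff {α : PTrans V} {c : V} :
    SwapsCenter α c ∧ (pim α).Nonempty ↔
      (α c = none ∧ pim α = {c}) ∨
        ((∃ j, α c = some j ∧ j ≠ c) ∧ ∀ i, i ≠ c → ∀ j, α i = some j → j = c) := by
  refine ⟨fun ⟨hα, him⟩ => ?_, ?_⟩
  · cases hc : α c with
    | some c' =>
      exact .inr ⟨⟨c', rfl, (hα c c' hc).1 rfl⟩, fun i hi j hij => not_not.1 (mt (hα i j hij).2 hi)⟩
    | none =>
      refine .inl ⟨rfl, Set.eq_singleton_iff_nonempty_unique_mem.2 ⟨him, ?_⟩⟩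
      rintro j ⟨i, hij⟩
      by_contra hj
      obtain rfl := (hα i j hij).2 hj
      simp_all
  · rintro (⟨hc, him⟩ | ⟨⟨c', hc, hc'⟩, hleaf⟩)
    · refine ⟨fun u u' hu => ?_, by simp [him]⟩
      have hu' : u' ∈ pim α := ⟨u, hu⟩
      rw [him] at hu'
      grind
    · exact ⟨fun u u' hu => by grind, ⟨c', c, hc⟩⟩

namespace SimpleGraph.IsStarCenteredAt

variable {G : SimpleGraph V} {c : V} {α : PTrans V}

theorem isPsEnd_of_preservesCenter (hG : G.IsStarCenteredAt c) (hα : PreservesCenter α c) :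
    IsPsEnd G α := by
  intro u v u' v' hu hv
  have hu' := hα u u' hu
  have hv' := hα v v' hv
  rw [hG, hG]
  grind

theorem isPsEnd_of_swapsCenter (hG : G.IsStarCenteredAt c) (hα : SwapsCenter α c) :
    IsPsEnd G α := by
  intro u v u' v' hu hv
  have hu' := hα u u' hu
  have hv' := hα v v' hv
  rw [hG, hG]
  grind

theorem image_leaf_adj_image_center (hG : G.IsStarCenteredAt c) (hα : IsPsEnd G α) {u u' c' : V}
    (hu : u ≠ c) (hu' : α u = some u') (hc' : α c = some c') : u' ≠ c' ∧ (u' = c ∨ c' = c) :=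
  (hG u' c').1 <| (hα u c u' c' hu' hc').1 <| (hG u c).2 ⟨hu, Or.inr rfl⟩

theorem image_leaves_eq_or_ne_center (hG : G.IsStarCenteredAt c) (hα : IsPsEnd G α) {u v u' v' : V}
    (hu : u ≠ c) (hv : v ≠ c) (hu' : α u = some u') (hv' : α v = some v') :
    u' = v' ∨ u' ≠ c ∧ v' ≠ c := by
  have := mt (hG u' v').2 <| mt (hα u v u' v' hu' hv').2 <| mt (hG u v).1 <| by tauto
  tauto

theorem preservesCenter_or_swapsCenter (hG : G.IsStarCenteredAt c) (hα : IsPsEnd G α) :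
    PreservesCenter α c ∨ SwapsCenter α c := by
  cases hc : α c with
  | some c' =>
    by_cases hc' : c' = c
    · refine .inl fun u u' hu => ?_
      obtain rfl | huc := eq_or_ne u c
      · grind
      · grind [image_leaf_adj_image_center hG hα huc hu hc]
    · refine .inr fun u u' hu => ?_
      obtain rfl | huc := eq_or_ne u c
      · grind
      · grind [image_leaf_adj_image_center hG hα huc hu hc]
  | none =>
    have hne {u u'} (hu : α u = some u') : u ≠ c := by rintro rfl; simp_all
    by_cases hleaf : ∃ i, α i = some c
    · obtain ⟨i, hi⟩ := hleaf
      refine .inr fun u u' hu => ?_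
      grind [image_leaves_eq_or_ne_center hG hα (hne hu) (hne hi) hu hi]
    · refine .inl fun u u' hu => ?_
      grind

/-- The empty map both preserves and swaps the center; it is listed among the preserving ones. -/
theorem isPsEnd_iff (hG : G.IsStarCenteredAt c) :
    IsPsEnd G α ↔ PreservesCenter α c ∨ SwapsCenter α c ∧ (pim α).Nonempty := by
  refine ⟨fun hα => ?_, ?_⟩
  · by_cases him : (pim α).Nonempty
    · exact (hG.preservesCenter_or_swapsCenter hα).imp_right (⟨·, him⟩)
    · exact .inl fun u u' hu => (him ⟨u', u, hu⟩).elim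
  · rintro (hα | ⟨hα, -⟩)
    exacts [hG.isPsEnd_of_preservesCenter hα, hG.isPsEnd_of_swapsCenter hα]

end SimpleGraph.IsStarCenteredAt

theorem stmt12 (n : ℕ) (hn : 3 ≤ n) :
    {α : PTrans (Fin n) | IsPsEnd (starGraph n) α} =
      ({α : PTrans (Fin n) | α ⟨0, by omega⟩ = some ⟨0, by omega⟩ ∧
          ∀ i : Fin n, i ≠ ⟨0, by omega⟩ → ∀ j, α i = some j → j ≠ ⟨0, by omega⟩} ∪
        {α : PTrans (Fin n) | α ⟨0, by omega⟩ = none ∧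
          ∀ i j : Fin n, α i = some j → j ≠ ⟨0, by omega⟩}) ∪
      {α : PTrans (Fin n) | α ⟨0, by omega⟩ = none ∧ pim α = {⟨0, by omega⟩}} ∪
      {α : PTrans (Fin n) | (∃ j : Fin n, α ⟨0, by omega⟩ = some j ∧ j ≠ ⟨0, by omega⟩) ∧
        ∀ i : Fin n, i ≠ ⟨0, by omega⟩ → ∀ j, α i = some j → j = ⟨0, by omega⟩} := by
  ext α
  rw [Set.mem_ofPred_eq, (starGraph_isStarCenteredAt (by omega)).isPsEnd_iff, preservesCenter_iff,
    swapsCenter_and_nonempty_iff]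
  simp only [Set.mem_union, Set.mem_ofPred_eq, or_assoc]
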